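/- In every skew Boolean algebra the following identities hold: (i) (x∧y)\z = (x\z)∧(y\z); (ii) (x∨y)\z = (x\z)∨(y\z); (iii) x\(y∨z) = (x\y)∧(x\z); (iv) x\(y∧z) = (x\y)∨(x\z); (v) (x\y)\z = (x\z)\y; (vi) (x\y)\z = x\(y∨z) = x\(z∨y); (vii) x\(x\y) = x∧y∧x; (viii) (x\y)∨y = y∨x∨y = y∨(x\y); (ix) x\(x∧y) = x\(y∧x) = x\y. -/
import Mathlib


universe u

/-- A skew Boolean algebra. -/
class SBA (S : Type u) where
  wedge : S → S → S
  vee : S → S → S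
  diff : S → S → S
  zero : S
  wedge_assoc : ∀ x y z : S, wedge (wedge x y) z = wedge x (wedge y z)
  vee_assoc : ∀ x y z : S, vee (vee x y) z = vee x (vee y z)
  absorb1 : ∀ x y : S, wedge x (vee x y) = x
  absorb2 : ∀ x y : S, wedge (vee y x) x = x
  absorb3 : ∀ x y : S, vee x (wedge x y) = x
  absorb4 : ∀ x y : S, vee (wedge y x) x = x
  sdistrib1 : ∀ x y z : S, wedge x (vee y z) = vee (wedge x y) (wedge x z)
  sdistrib2 : ∀ x y z : S, wedge (vee x y) z = vee (wedge x z) (wedge y z)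
  zero_wedge : ∀ x : S, wedge zero x = zero
  wedge_zero : ∀ x : S, wedge x zero = zero
  zero_vee : ∀ x : S, vee zero x = x
  vee_zero : ∀ x : S, vee x zero = x
  diff_ax1 : ∀ x y : S, vee (wedge (wedge x y) x) (diff x y) = x
  diff_ax2 : ∀ x y : S, wedge (wedge (wedge x y) x) (diff x y) = zero
  diff_ax3 : ∀ x y : S, wedge (diff x y) (wedge (wedge x y) x) = zero

namespace SBA

scoped infixl:70 " ⋏ " => SBA.wedge
scoped infixl:65 " ⋎ " => SBA.vee
scoped infixl:70 " ∖ " => SBA.diff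

variable {S : Type u} [SBA S]

/-- Green's relation `D`: `x D y` iff `x⋏y⋏x = x` and `y⋏x⋏y = y`. -/
def Drel (x y : S) : Prop := x ⋏ y ⋏ x = x ∧ y ⋏ x ⋏ y = y

/-- The natural partial order: `x ≤ y` iff `x⋏y = x = y⋏x`. -/
def nle (x y : S) : Prop := x ⋏ y = x ∧ y ⋏ x = x

/-- An atom: a nonzero element with nothing strictly between it and `0`. -/
def IsAtom (a : S) : Prop := a ≠ zero ∧ ∀ x : S, nle x a → x = zero ∨ x = a

/-- `X` generates `S`: the only subset of `S` containing `X` and `0` and closed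
under the three operations is `S` itself. -/
def Generates (X : Set S) : Prop :=
  ∀ T : Set S, X ⊆ T → zero ∈ T →
    (∀ a b : S, a ∈ T → b ∈ T → a ⋏ b ∈ T ∧ a ⋎ b ∈ T ∧ a ∖ b ∈ T) →
    T = Set.univ

/-- A homomorphism of skew Boolean algebras. -/
def IsHom {T : Type u} [SBA T] (f : S → T) : Prop :=
  (∀ a b : S, f (a ⋏ b) = f a ⋏ f b) ∧ (∀ a b : S, f (a ⋎ b) = f a ⋎ f b) ∧
    (∀ a b : S, f (a ∖ b) = f a ∖ f b) ∧ f zero = zero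

end SBA

open SBA

/-- A left-handed skew Boolean algebra. -/
class LeftHanded (S : Type u) [SBA S] : Prop where
  lh_wedge : ∀ x y : S, x ⋏ y ⋏ x = x ⋏ y
  lh_vee : ∀ x y : S, x ⋎ y ⋎ x = y ⋎ x

/-- `S` is freely generated by `X` over the variety of all skew Boolean algebras. -/
def FreelyGenerates (S : Type u) [SBA S] (X : Set S) : Prop :=
  Generates X ∧
    ∀ (T : Type u) [SBA T], ∀ g : X → T,
      ∃ f : S → T, IsHom f ∧ ∀ x : X, f x = g x

/-- `S` is freely generated by `X` over the variety of left-handed skew Boolean algebras. -/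
def LFreelyGenerates (S : Type u) [SBA S] [LeftHanded S] (X : Set S) : Prop :=
  Generates X ∧
    ∀ (T : Type u) [SBA T] [LeftHanded T], ∀ g : X → T,
      ∃ f : S → T, IsHom f ∧ ∀ x : X, f x = g x

section SBALemmas
variable {S : Type u} [SBA S]

private lemma widem (x : S) : x ⋏ x = x := by
  have h := SBA.absorb1 x (x ⋏ x)
  rwa [SBA.absorb3 x x] at h

private lemma videm (x : S) : x ⋎ x = x := by
  have h := SBA.absorb4 x x
  rwa [widem] at h

private lemma zsplit1 {p q : S} (h : p ⋎ q = SBA.zero) : p = SBA.zero := by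
  have h1 := SBA.absorb1 p q
  rw [h, SBA.wedge_zero] at h1
  exact h1.symm

private lemma zsplit2 {p q : S} (h : p ⋎ q = SBA.zero) : q = SBA.zero := by
  have h1 := SBA.absorb2 q p
  rw [h, SBA.zero_wedge] at h1
  exact h1.symm

private lemma comm0 {p q : S} (h1 : p ⋏ q = SBA.zero) (h2 : q ⋏ p = SBA.zero) :
    p ⋎ q = q ⋎ p := by
  have e1 : (p ⋎ q) ⋏ (q ⋎ p) = p ⋎ q := by
    rw [SBA.sdistrib2, SBA.sdistrib1, h1, SBA.zero_vee, widem, SBA.absorb1]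
  have e2 : (p ⋎ q) ⋏ (q ⋎ p) = q ⋎ p := by
    rw [SBA.sdistrib1, SBA.absorb2, SBA.sdistrib2, h2, SBA.vee_zero, widem]
  rw [← e1, e2]

private lemma mid0 {p q : S} (r : S) (h : p ⋏ q = SBA.zero) :
    p ⋏ r ⋏ q = SBA.zero := by
  have h1 : p ⋏ (r ⋏ q ⋎ q) = p ⋏ q := by rw [SBA.absorb4]
  rw [SBA.sdistrib1, h, ← SBA.wedge_assoc] at h1
  have := zsplit1 h1
  exact this

end SBALemmas
section SBALemmas2
variable {S : Type u} [SBA S]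

private lemma wi (a c : S) : a ⋏ (a ⋏ c) = a ⋏ c := by
  rw [← SBA.wedge_assoc, widem]

private lemma wd (x y : S) : x ⋏ (x ∖ y) = x ∖ y := by
  have h := SBA.absorb2 (x ∖ y) (x ⋏ y ⋏ x)
  rwa [SBA.diff_ax1] at h

private lemma dw (x y : S) : (x ∖ y) ⋏ x = x ∖ y := by
  have h : (x ∖ y) ⋏ (x ⋏ y ⋏ x ⋎ x ∖ y) = x ∖ y := by
    rw [SBA.sdistrib1, SBA.diff_ax3, SBA.zero_vee, widem]
  rwa [SBA.diff_ax1] at h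

private lemma d_yx (x y : S) : (x ∖ y) ⋏ y ⋏ x = SBA.zero := by
  have h := SBA.diff_ax3 x y
  rw [SBA.wedge_assoc x y x, ← SBA.wedge_assoc (x ∖ y) x (y ⋏ x), dw,
    ← SBA.wedge_assoc] at h
  exact h

private lemma d_y (x y : S) : (x ∖ y) ⋏ y = SBA.zero := by
  have h2 : ((x ∖ y) ⋏ y) ⋏ (x ∖ y) = SBA.zero := by
    have e : (((x ∖ y) ⋏ y) ⋏ x) ⋏ (x ∖ y) = SBA.zero := by
      rw [d_yx, SBA.zero_wedge]
    rwa [SBA.wedge_assoc ((x ∖ y) ⋏ y) x (x ∖ y), wd] at e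
  calc (x ∖ y) ⋏ y = ((x ∖ y) ⋏ y) ⋏ ((x ∖ y) ⋏ y) := (widem _).symm
    _ = (((x ∖ y) ⋏ y) ⋏ (x ∖ y)) ⋏ y := (SBA.wedge_assoc _ _ _).symm
    _ = SBA.zero := by rw [h2, SBA.zero_wedge]

private lemma y_d (x y : S) : y ⋏ (x ∖ y) = SBA.zero := by
  calc y ⋏ (x ∖ y) = (y ⋏ (x ∖ y)) ⋏ (y ⋏ (x ∖ y)) := (widem _).symm
    _ = y ⋏ ((x ∖ y) ⋏ (y ⋏ (x ∖ y))) := SBA.wedge_assoc _ _ _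
    _ = y ⋏ (((x ∖ y) ⋏ y) ⋏ (x ∖ y)) := by rw [← SBA.wedge_assoc (x ∖ y) y (x ∖ y)]
    _ = SBA.zero := by rw [d_y, SBA.zero_wedge, SBA.wedge_zero]

private lemma uniq {t u u' v1 v2 : S} (h1 : v1 ⋎ u = t) (h2 : v1 ⋏ u' = SBA.zero)
    (h3 : u ⋏ t = u) (h4 : v2 ⋎ u' = t) (h5 : u ⋏ v2 = SBA.zero) (h6 : t ⋏ u' = u') :
    u = u' := by
  have e1 : u ⋏ (v2 ⋎ u') = u ⋏ u' := by rw [SBA.sdistrib1, h5, SBA.zero_vee]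
  rw [h4, h3] at e1
  have e2 : (v1 ⋎ u) ⋏ u' = u ⋏ u' := by rw [SBA.sdistrib2, h2, SBA.zero_vee]
  rw [h1, h6] at e2
  rw [e1, ← e2]

private lemma rlemma {a x : S} (h : a ⋏ x = a) (b : S) : a ⋏ b ⋏ a = a ⋏ b ⋏ x := by
  have hd : a ⋏ (x ⋏ b ⋏ x ⋎ x ∖ b) = a := by rw [SBA.diff_ax1, h]
  have p2 : (a ⋏ b) ⋏ (a ⋏ (x ∖ b)) = SBA.zero := by
    have z1 : (a ⋏ b) ⋏ (x ∖ b) = SBA.zero := by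
      rw [SBA.wedge_assoc, y_d, SBA.wedge_zero]
    have h2 := mid0 a z1
    rwa [SBA.wedge_assoc (a ⋏ b) a (x ∖ b)] at h2
  have p1 : (a ⋏ b) ⋏ (a ⋏ (x ⋏ b ⋏ x)) = a ⋏ b ⋏ x := by
    calc (a ⋏ b) ⋏ (a ⋏ (x ⋏ b ⋏ x))
        = (a ⋏ b) ⋏ (a ⋏ (x ⋏ (b ⋏ x))) := by rw [SBA.wedge_assoc x b x]
      _ = (a ⋏ b) ⋏ ((a ⋏ x) ⋏ (b ⋏ x)) := by rw [SBA.wedge_assoc a x (b ⋏ x)]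
      _ = (a ⋏ b) ⋏ (a ⋏ (b ⋏ x)) := by rw [h]
      _ = (a ⋏ b) ⋏ ((a ⋏ b) ⋏ x) := by rw [← SBA.wedge_assoc a b x]
      _ = (a ⋏ b) ⋏ x := wi _ _
  calc a ⋏ b ⋏ a = (a ⋏ b) ⋏ (a ⋏ (x ⋏ b ⋏ x ⋎ x ∖ b)) := by rw [hd]
    _ = (a ⋏ b) ⋏ (a ⋏ (x ⋏ b ⋏ x) ⋎ a ⋏ (x ∖ b)) := by rw [SBA.sdistrib1 a]
    _ = (a ⋏ b) ⋏ (a ⋏ (x ⋏ b ⋏ x)) ⋎ (a ⋏ b) ⋏ (a ⋏ (x ∖ b)) := by rw [SBA.sdistrib1]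
    _ = a ⋏ b ⋏ x := by rw [p1, p2, SBA.vee_zero]

private lemma llemma {a x : S} (h : x ⋏ a = a) (b : S) : a ⋏ b ⋏ a = x ⋏ b ⋏ a := by
  have hd : (x ⋏ b ⋏ x ⋎ x ∖ b) ⋏ a = a := by rw [SBA.diff_ax1, h]
  have p2 : ((x ∖ b) ⋏ a) ⋏ (b ⋏ a) = SBA.zero := by
    have z1 : (x ∖ b) ⋏ (b ⋏ a) = SBA.zero := by
      rw [← SBA.wedge_assoc, d_y, SBA.zero_wedge]
    exact mid0 a z1
  have p1 : ((x ⋏ b ⋏ x) ⋏ a) ⋏ (b ⋏ a) = x ⋏ b ⋏ a := by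
    calc ((x ⋏ b ⋏ x) ⋏ a) ⋏ (b ⋏ a)
        = ((x ⋏ b) ⋏ (x ⋏ a)) ⋏ (b ⋏ a) := by rw [SBA.wedge_assoc (x ⋏ b) x a]
      _ = ((x ⋏ b) ⋏ a) ⋏ (b ⋏ a) := by rw [h]
      _ = (x ⋏ (b ⋏ a)) ⋏ (b ⋏ a) := by rw [SBA.wedge_assoc x b a]
      _ = x ⋏ ((b ⋏ a) ⋏ (b ⋏ a)) := SBA.wedge_assoc _ _ _
      _ = x ⋏ (b ⋏ a) := by rw [widem]
      _ = x ⋏ b ⋏ a := (SBA.wedge_assoc x b a).symm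
  calc a ⋏ b ⋏ a = a ⋏ (b ⋏ a) := SBA.wedge_assoc _ _ _
    _ = ((x ⋏ b ⋏ x ⋎ x ∖ b) ⋏ a) ⋏ (b ⋏ a) := by rw [hd]
    _ = ((x ⋏ b ⋏ x) ⋏ a ⋎ (x ∖ b) ⋏ a) ⋏ (b ⋏ a) := by rw [SBA.sdistrib2]
    _ = ((x ⋏ b ⋏ x) ⋏ a) ⋏ (b ⋏ a) ⋎ ((x ∖ b) ⋏ a) ⋏ (b ⋏ a) := by rw [SBA.sdistrib2]
    _ = x ⋏ b ⋏ a := by rw [p1, p2, SBA.vee_zero]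

private lemma localcomm {a b x : S} (ha1 : a ⋏ x = a) (ha2 : x ⋏ a = a)
    (hb1 : b ⋏ x = b) (hb2 : x ⋏ b = b) : a ⋏ b = b ⋏ a := by
  have r := rlemma ha1 b
  have l := llemma ha2 b
  rw [SBA.wedge_assoc a b x, hb1] at r
  rw [hb2] at l
  rw [← r, l]

private lemma eqx {A B x : S} (hA1 : A ⋏ x = A) (hA2 : x ⋏ A = A)
    (hB1 : B ⋏ x = B) (hB2 : x ⋏ B = B)
    (hAB : A ∖ B = SBA.zero) (hBA : B ∖ A = SBA.zero) : A = B := by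
  have c := localcomm hA1 hA2 hB1 hB2
  have dA := SBA.diff_ax1 A B
  rw [hAB, SBA.vee_zero] at dA
  have dB := SBA.diff_ax1 B A
  rw [hBA, SBA.vee_zero] at dB
  have e1 : A ⋏ B ⋏ A = B ⋏ A := by
    rw [c, SBA.wedge_assoc, widem]
  have e2 : B ⋏ A ⋏ B = B ⋏ A := by
    rw [show B ⋏ A ⋏ B = (A ⋏ B) ⋏ B by rw [c], SBA.wedge_assoc, widem, c]
  rw [← dA, e1, ← e2, dB]

private lemma below_trans {a b x : S} (h1 : a ⋏ b = a) (h2 : b ⋏ a = a)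
    (h3 : b ⋏ x = b) (h4 : x ⋏ b = b) : a ⋏ x = a ∧ x ⋏ a = a := by
  constructor
  · rw [← h1, SBA.wedge_assoc, h3]
  · rw [← h2, ← SBA.wedge_assoc, h4]

end SBALemmas2
section SBALemmas3
variable {S : Type u} [SBA S]

private lemma dec' (x y : S) : (x ∖ y) ⋎ (x ⋏ y ⋏ x) = x := by
  have h := comm0 (SBA.diff_ax2 x y) (SBA.diff_ax3 x y)
  rw [← h]
  exact SBA.diff_ax1 x y

private lemma part7 (x y : S) : x ∖ (x ∖ y) = x ⋏ y ⋏ x := by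
  have h2 := SBA.diff_ax2 x (x ∖ y)
  rw [wd, dw] at h2
  have h4 := SBA.diff_ax1 x (x ∖ y)
  rw [wd, dw] at h4
  have h3 : (x ⋏ y ⋏ x) ⋏ x = x ⋏ y ⋏ x := by
    rw [SBA.wedge_assoc (x ⋏ y) x x, widem]
  exact (uniq (dec' x y) h2 h3 h4 (SBA.diff_ax2 x y) (wd x (x ∖ y))).symm

private lemma diff_congr {x a b : S} (h : x ⋏ a ⋏ x = x ⋏ b ⋏ x) : x ∖ a = x ∖ b := by
  refine uniq (t := x) (v1 := x ⋏ a ⋏ x) (v2 := x ⋏ b ⋏ x) (SBA.diff_ax1 x a) ?_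
    (dw x a) (SBA.diff_ax1 x b) ?_ (wd x b)
  · rw [h]; exact SBA.diff_ax2 x b
  · rw [← h]; exact SBA.diff_ax3 x a

private lemma part9a (x y : S) : x ∖ (x ⋏ y) = x ∖ y := by
  apply diff_congr
  rw [show x ⋏ (x ⋏ y) = x ⋏ y from by rw [← SBA.wedge_assoc, widem]]

private lemma part9b (x y : S) : x ∖ (y ⋏ x) = x ∖ y := by
  apply diff_congr
  rw [show x ⋏ (y ⋏ x) ⋏ x = x ⋏ y ⋏ x from by
    rw [SBA.wedge_assoc x (y ⋏ x) x, SBA.wedge_assoc y x x, widem, ← SBA.wedge_assoc]]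

private lemma part3 (x y z : S) : x ∖ (y ⋎ z) = (x ∖ y) ⋏ (x ∖ z) := by
  have hu'y : (x ∖ (y ⋎ z)) ⋏ y = SBA.zero ∧ (x ∖ (y ⋎ z)) ⋏ z = SBA.zero := by
    have h := d_y x (y ⋎ z)
    rw [SBA.sdistrib1] at h
    exact ⟨zsplit1 h, zsplit2 h⟩
  have hyu' : y ⋏ (x ∖ (y ⋎ z)) = SBA.zero ∧ z ⋏ (x ∖ (y ⋎ z)) = SBA.zero := by
    have h := y_d x (y ⋎ z)
    rw [SBA.sdistrib2] at h
    exact ⟨zsplit1 h, zsplit2 h⟩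
  have e1 : (x ⋏ z ⋏ x) ⋏ (x ∖ (y ⋎ z)) = SBA.zero := by
    rw [SBA.wedge_assoc (x ⋏ z) x (x ∖ (y ⋎ z)), wd, SBA.wedge_assoc, hyu'.2,
      SBA.wedge_zero]
  have hexp : ((x ⋏ y ⋏ x) ⋏ (x ⋏ z ⋏ x) ⋎ (x ⋏ y ⋏ x) ⋏ (x ∖ z)) ⋎
      ((x ∖ y) ⋏ (x ⋏ z ⋏ x) ⋎ (x ∖ y) ⋏ (x ∖ z)) = x := by
    rw [← SBA.sdistrib1, ← SBA.sdistrib1, ← SBA.sdistrib2, SBA.diff_ax1, SBA.diff_ax1,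
      widem]
  have h1 : ((x ⋏ y ⋏ x) ⋏ (x ⋏ z ⋏ x) ⋎ (x ⋏ y ⋏ x) ⋏ (x ∖ z) ⋎ (x ∖ y) ⋏ (x ⋏ z ⋏ x))
      ⋎ ((x ∖ y) ⋏ (x ∖ z)) = x := by
    rw [SBA.vee_assoc ((x ⋏ y ⋏ x) ⋏ (x ⋏ z ⋏ x) ⋎ (x ⋏ y ⋏ x) ⋏ (x ∖ z))]
    exact hexp
  have hT1 : ((x ⋏ y ⋏ x) ⋏ (x ⋏ z ⋏ x)) ⋏ (x ∖ (y ⋎ z)) = SBA.zero := by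
    rw [SBA.wedge_assoc, e1, SBA.wedge_zero]
  have hT2 : ((x ⋏ y ⋏ x) ⋏ (x ∖ z)) ⋏ (x ∖ (y ⋎ z)) = SBA.zero := by
    have pq : (x ⋏ y) ⋏ (x ∖ (y ⋎ z)) = SBA.zero := by
      rw [SBA.wedge_assoc, hyu'.1, SBA.wedge_zero]
    have h2' := mid0 (x ⋏ (x ∖ z)) pq
    rw [show (x ⋏ y ⋏ x) ⋏ (x ∖ z) = (x ⋏ y) ⋏ (x ⋏ (x ∖ z)) from
      SBA.wedge_assoc (x ⋏ y) x (x ∖ z)]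
    exact h2'
  have hT3 : ((x ∖ y) ⋏ (x ⋏ z ⋏ x)) ⋏ (x ∖ (y ⋎ z)) = SBA.zero := by
    rw [SBA.wedge_assoc, e1, SBA.wedge_zero]
  have h2 : ((x ⋏ y ⋏ x) ⋏ (x ⋏ z ⋏ x) ⋎ (x ⋏ y ⋏ x) ⋏ (x ∖ z) ⋎ (x ∖ y) ⋏ (x ⋏ z ⋏ x))
      ⋏ (x ∖ (y ⋎ z)) = SBA.zero := by
    rw [SBA.sdistrib2, SBA.sdistrib2, hT1, hT2, hT3, SBA.vee_zero, SBA.vee_zero]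
  have h3 : ((x ∖ y) ⋏ (x ∖ z)) ⋏ x = (x ∖ y) ⋏ (x ∖ z) := by
    rw [SBA.wedge_assoc, dw]
  have h5 : ((x ∖ y) ⋏ (x ∖ z)) ⋏ (x ⋏ (y ⋎ z) ⋏ x) = SBA.zero := by
    have huy : ((x ∖ y) ⋏ (x ∖ z)) ⋏ y = SBA.zero := mid0 (x ∖ z) (d_y x y)
    have huz : ((x ∖ y) ⋏ (x ∖ z)) ⋏ z = SBA.zero := by
      rw [SBA.wedge_assoc, d_y, SBA.wedge_zero]
    have huyz : ((x ∖ y) ⋏ (x ∖ z)) ⋏ (y ⋎ z) = SBA.zero := by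
      rw [SBA.sdistrib1, huy, huz, SBA.vee_zero]
    calc ((x ∖ y) ⋏ (x ∖ z)) ⋏ (x ⋏ (y ⋎ z) ⋏ x)
        = (((x ∖ y) ⋏ (x ∖ z)) ⋏ (x ⋏ (y ⋎ z))) ⋏ x := (SBA.wedge_assoc _ _ _).symm
      _ = ((((x ∖ y) ⋏ (x ∖ z)) ⋏ x) ⋏ (y ⋎ z)) ⋏ x := by
          rw [← SBA.wedge_assoc ((x ∖ y) ⋏ (x ∖ z)) x (y ⋎ z)]
      _ = SBA.zero := by rw [h3, huyz, SBA.zero_wedge]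
  exact (uniq h1 h2 h3 (SBA.diff_ax1 x (y ⋎ z)) h5 (wd x (y ⋎ z))).symm

end SBALemmas3
section SBALemmas4
variable {S : Type u} [SBA S]

private lemma part4 (x y z : S) : x ∖ (y ⋏ z) = (x ∖ y) ⋎ (x ∖ z) := by
  have hA1 : (x ∖ (y ⋏ z)) ⋏ x = x ∖ (y ⋏ z) := dw x (y ⋏ z)
  have hA2 : x ⋏ (x ∖ (y ⋏ z)) = x ∖ (y ⋏ z) := wd x (y ⋏ z)
  have hB1 : ((x ∖ y) ⋎ (x ∖ z)) ⋏ x = (x ∖ y) ⋎ (x ∖ z) := by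
    rw [SBA.sdistrib2, dw, dw]
  have hB2 : x ⋏ ((x ∖ y) ⋎ (x ∖ z)) = (x ∖ y) ⋎ (x ∖ z) := by
    rw [SBA.sdistrib1, wd, wd]
  -- part (a): A ∖ B = 0
  have hAB : (x ∖ (y ⋏ z)) ∖ ((x ∖ y) ⋎ (x ∖ z)) = SBA.zero := by
    have hcA : ((x ∖ (y ⋏ z)) ∖ ((x ∖ y) ⋎ (x ∖ z))) ⋏ (x ∖ (y ⋏ z)) =
        (x ∖ (y ⋏ z)) ∖ ((x ∖ y) ⋎ (x ∖ z)) := dw _ _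
    have hAc : (x ∖ (y ⋏ z)) ⋏ ((x ∖ (y ⋏ z)) ∖ ((x ∖ y) ⋎ (x ∖ z))) =
        (x ∖ (y ⋏ z)) ∖ ((x ∖ y) ⋎ (x ∖ z)) := wd _ _
    obtain ⟨hcx, hxc⟩ := below_trans hcA hAc hA1 hA2
    have hcB := d_y (x ∖ (y ⋏ z)) ((x ∖ y) ⋎ (x ∖ z))
    rw [SBA.sdistrib1] at hcB
    have hcs := zsplit1 hcB
    have hct := zsplit2 hcB
    have hcyz : ((x ∖ (y ⋏ z)) ∖ ((x ∖ y) ⋎ (x ∖ z))) ⋏ (y ⋏ z) = SBA.zero := by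
      rw [← hcA, SBA.wedge_assoc, d_y, SBA.wedge_zero]
    have e1 : (x ∖ (y ⋏ z)) ∖ ((x ∖ y) ⋎ (x ∖ z)) =
        (((x ∖ (y ⋏ z)) ∖ ((x ∖ y) ⋎ (x ∖ z))) ⋏ y) ⋏ x := by
      have e1' : ((x ∖ (y ⋏ z)) ∖ ((x ∖ y) ⋎ (x ∖ z))) ⋏ (x ⋏ y ⋏ x ⋎ x ∖ y) =
          (((x ∖ (y ⋏ z)) ∖ ((x ∖ y) ⋎ (x ∖ z))) ⋏ y) ⋏ x := by
        rw [SBA.sdistrib1, hcs, SBA.vee_zero,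
          ← SBA.wedge_assoc _ (x ⋏ y) x, ← SBA.wedge_assoc _ x y, hcx]
      rwa [SBA.diff_ax1, hcx] at e1'
    have e2 : (x ∖ (y ⋏ z)) ∖ ((x ∖ y) ⋎ (x ∖ z)) =
        (((x ∖ (y ⋏ z)) ∖ ((x ∖ y) ⋎ (x ∖ z))) ⋏ z) ⋏ x := by
      have e2' : ((x ∖ (y ⋏ z)) ∖ ((x ∖ y) ⋎ (x ∖ z))) ⋏ (x ⋏ z ⋏ x ⋎ x ∖ z) =
          (((x ∖ (y ⋏ z)) ∖ ((x ∖ y) ⋎ (x ∖ z))) ⋏ z) ⋏ x := by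
        rw [SBA.sdistrib1, hct, SBA.vee_zero,
          ← SBA.wedge_assoc _ (x ⋏ z) x, ← SBA.wedge_assoc _ x z, hcx]
      rwa [SBA.diff_ax1, hcx] at e2'
    have e3 : ((((x ∖ (y ⋏ z)) ∖ ((x ∖ y) ⋎ (x ∖ z))) ⋏ z) ⋏ x) ⋏
        ((x ∖ (y ⋏ z)) ∖ ((x ∖ y) ⋎ (x ∖ z))) =
        (((x ∖ (y ⋏ z)) ∖ ((x ∖ y) ⋎ (x ∖ z))) ⋏ z) ⋏
        ((x ∖ (y ⋏ z)) ∖ ((x ∖ y) ⋎ (x ∖ z))) := by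
      rw [SBA.wedge_assoc, hxc]
    have e4 : (x ∖ (y ⋏ z)) ∖ ((x ∖ y) ⋎ (x ∖ z)) =
        (((x ∖ (y ⋏ z)) ∖ ((x ∖ y) ⋎ (x ∖ z))) ⋏ z) ⋏
        ((x ∖ (y ⋏ z)) ∖ ((x ∖ y) ⋎ (x ∖ z))) := by
      rw [← e3, ← e2, widem]
    have e5 : (x ∖ (y ⋏ z)) ∖ ((x ∖ y) ⋎ (x ∖ z)) =
        (((((x ∖ (y ⋏ z)) ∖ ((x ∖ y) ⋎ (x ∖ z))) ⋏ y) ⋏ x) ⋏ z) ⋏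
        ((x ∖ (y ⋏ z)) ∖ ((x ∖ y) ⋎ (x ∖ z))) := by
      rw [← e1]; exact e4
    have pq : (((x ∖ (y ⋏ z)) ∖ ((x ∖ y) ⋎ (x ∖ z))) ⋏ y) ⋏
        (z ⋏ ((x ∖ (y ⋏ z)) ∖ ((x ∖ y) ⋎ (x ∖ z)))) = SBA.zero := by
      rw [SBA.wedge_assoc _ y _, ← SBA.wedge_assoc y z _,
        ← SBA.wedge_assoc _ (y ⋏ z) _, hcyz, SBA.zero_wedge]
    have big := mid0 x pq
    rw [SBA.wedge_assoc _ z _, big] at e5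
    exact e5
  -- part (b): B ∖ A = 0
  have hBA : ((x ∖ y) ⋎ (x ∖ z)) ∖ (x ∖ (y ⋏ z)) = SBA.zero := by
    have hdB : (((x ∖ y) ⋎ (x ∖ z)) ∖ (x ∖ (y ⋏ z))) ⋏ ((x ∖ y) ⋎ (x ∖ z)) =
        ((x ∖ y) ⋎ (x ∖ z)) ∖ (x ∖ (y ⋏ z)) := dw _ _
    have hBd : ((x ∖ y) ⋎ (x ∖ z)) ⋏ (((x ∖ y) ⋎ (x ∖ z)) ∖ (x ∖ (y ⋏ z))) =
        ((x ∖ y) ⋎ (x ∖ z)) ∖ (x ∖ (y ⋏ z)) := wd _ _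
    obtain ⟨hdx, hxd⟩ := below_trans hdB hBd hB1 hB2
    have hdA0 : (((x ∖ y) ⋎ (x ∖ z)) ∖ (x ∖ (y ⋏ z))) ⋏ (x ∖ (y ⋏ z)) = SBA.zero :=
      d_y _ _
    have hByz : ((x ∖ y) ⋎ (x ∖ z)) ⋏ (y ⋏ z) = SBA.zero := by
      rw [SBA.sdistrib2, ← SBA.wedge_assoc (x ∖ y) y z, d_y, SBA.zero_wedge,
        ← SBA.wedge_assoc (x ∖ z) y z, mid0 y (d_y x z), SBA.vee_zero]
    have hdyz : (((x ∖ y) ⋎ (x ∖ z)) ∖ (x ∖ (y ⋏ z))) ⋏ (y ⋏ z) = SBA.zero := by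
      rw [← hdB, SBA.wedge_assoc, hByz, SBA.wedge_zero]
    have e : (((x ∖ y) ⋎ (x ∖ z)) ∖ (x ∖ (y ⋏ z))) ⋏
        (x ⋏ (y ⋏ z) ⋏ x ⋎ x ∖ (y ⋏ z)) = SBA.zero := by
      rw [SBA.sdistrib1, hdA0, SBA.vee_zero, ← SBA.wedge_assoc _ (x ⋏ (y ⋏ z)) x,
        ← SBA.wedge_assoc _ x (y ⋏ z), hdx, hdyz, SBA.zero_wedge]
    rwa [SBA.diff_ax1, hdx] at e
  exact eqx hA1 hA2 hB1 hB2 hAB hBA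

end SBALemmas4
section SBALemmas5
variable {S : Type u} [SBA S]

private lemma aux_dz {w z d : S} (hdw : d ⋏ w = d) (hdz : d ⋏ z = SBA.zero)
    (hdA : d ⋏ (w ∖ z) = SBA.zero) : d = SBA.zero := by
  have e : d ⋏ (w ⋏ z ⋏ w ⋎ w ∖ z) = SBA.zero := by
    rw [SBA.sdistrib1, hdA, SBA.vee_zero, ← SBA.wedge_assoc d (w ⋏ z) w,
      ← SBA.wedge_assoc d w z, hdw, hdz, SBA.zero_wedge]
  rwa [SBA.diff_ax1, hdw] at e

private lemma aux_ecx {x z c : S} (hcz : c ⋏ z = SBA.zero) : c ⋏ x = c ⋏ (x ∖ z) := by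
  have u1 := mid0 x hcz
  have u2 : ((c ⋏ x) ⋏ z) ⋏ x = SBA.zero := by rw [u1, SBA.zero_wedge]
  have u3 : c ⋏ (x ⋏ z ⋏ x) = SBA.zero := by simpa only [SBA.wedge_assoc] using u2
  have e : c ⋏ (x ⋏ z ⋏ x ⋎ x ∖ z) = c ⋏ (x ∖ z) := by
    rw [SBA.sdistrib1, u3, SBA.zero_vee]
  rwa [SBA.diff_ax1] at e

private lemma aux_cx {x z c : S} (hcz : c ⋏ z = SBA.zero)
    (hcs : c ⋏ (x ∖ z) = SBA.zero) : c ⋏ x = SBA.zero := by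
  rw [aux_ecx hcz]; exact hcs

private lemma aux_xc {y z c : S} (hzc : z ⋏ c = SBA.zero) : y ⋏ c = (y ∖ z) ⋏ c := by
  have u1 := mid0 y hzc
  have u2 : y ⋏ ((z ⋏ y) ⋏ c) = SBA.zero := by rw [u1, SBA.wedge_zero]
  have u3 : (y ⋏ z ⋏ y) ⋏ c = SBA.zero := by simpa only [SBA.wedge_assoc] using u2
  have e : (y ⋏ z ⋏ y ⋎ y ∖ z) ⋏ c = (y ∖ z) ⋏ c := by
    rw [SBA.sdistrib2, u3, SBA.zero_vee]
  rwa [SBA.diff_ax1] at e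

private lemma jlemma (p q : S) : p ⋎ (q ⋏ p ⋎ q) = p ⋎ q := by
  have h1 : q ⋏ (p ⋎ q) = q ⋏ p ⋎ q := by rw [SBA.sdistrib1, widem]
  have h2 : (p ⋎ q) ⋏ (p ⋎ q) = p ⋏ (p ⋎ q) ⋎ q ⋏ (p ⋎ q) := SBA.sdistrib2 _ _ _
  rw [widem, SBA.absorb1, h1] at h2
  exact h2.symm

private lemma aux_p1AB {x y z c : S} (hcw : c ⋏ (x ⋏ y) = c) (hcz : c ⋏ z = SBA.zero)
    (hcB : c ⋏ ((x ∖ z) ⋏ (y ∖ z)) = SBA.zero) : c = SBA.zero := by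
  calc c = c ⋏ (x ⋏ y) := hcw.symm
    _ = (c ⋏ x) ⋏ y := (SBA.wedge_assoc _ _ _).symm
    _ = (c ⋏ (x ∖ z)) ⋏ y := by rw [aux_ecx hcz]
    _ = (c ⋏ (x ∖ z)) ⋏ (y ∖ z) := by rw [aux_ecx (mid0 (x ∖ z) hcz)]
    _ = c ⋏ ((x ∖ z) ⋏ (y ∖ z)) := SBA.wedge_assoc _ _ _
    _ = SBA.zero := hcB

private lemma aux_p2AB {x y z c : S} (hcw : c ⋏ (x ⋎ y) = c) (hcz : c ⋏ z = SBA.zero)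
    (hcs : c ⋏ (x ∖ z) = SBA.zero) (hct : c ⋏ (y ∖ z) = SBA.zero) : c = SBA.zero := by
  calc c = c ⋏ (x ⋎ y) := hcw.symm
    _ = c ⋏ x ⋎ c ⋏ y := SBA.sdistrib1 _ _ _
    _ = SBA.zero := by rw [aux_cx hcz hcs, aux_cx hcz hct, SBA.vee_zero]

private lemma part1 (x y z : S) : (x ⋏ y) ∖ z = (x ∖ z) ⋏ (y ∖ z) := by
  have hstz : ((x ∖ z) ⋏ (y ∖ z)) ⋏ z = SBA.zero := by
    rw [SBA.wedge_assoc, d_y, SBA.wedge_zero]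
  have hB1 : ((x ∖ z) ⋏ (y ∖ z)) ⋏ (x ⋏ y) = (x ∖ z) ⋏ (y ∖ z) := by
    have c1 : ((x ∖ z) ⋏ (y ∖ z)) ⋏ (x ⋏ y) = ((x ∖ z) ⋏ (y ∖ z)) ⋏ ((x ∖ z) ⋏ (y ∖ z)) := by
      calc ((x ∖ z) ⋏ (y ∖ z)) ⋏ (x ⋏ y)
          = (((x ∖ z) ⋏ (y ∖ z)) ⋏ x) ⋏ y := (SBA.wedge_assoc _ x y).symm
        _ = (((x ∖ z) ⋏ (y ∖ z)) ⋏ (x ∖ z)) ⋏ y := by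
            rw [SBA.wedge_assoc (x ∖ z) (y ∖ z) x, aux_ecx (d_y y z),
              ← SBA.wedge_assoc (x ∖ z) (y ∖ z) (x ∖ z)]
        _ = (((x ∖ z) ⋏ (y ∖ z)) ⋏ (x ∖ z)) ⋏ (y ∖ z) := by
            rw [aux_ecx (mid0 (x ∖ z) hstz)]
        _ = ((x ∖ z) ⋏ (y ∖ z)) ⋏ ((x ∖ z) ⋏ (y ∖ z)) := SBA.wedge_assoc _ _ _
    rw [c1, widem]
  have hz2 : z ⋏ (((y ∖ z) ⋏ (x ∖ z)) ⋏ (y ∖ z)) = SBA.zero := by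
    have h := mid0 ((y ∖ z) ⋏ (x ∖ z)) (y_d y z)
    simpa only [SBA.wedge_assoc] using h
  have hB2 : (x ⋏ y) ⋏ ((x ∖ z) ⋏ (y ∖ z)) = (x ∖ z) ⋏ (y ∖ z) := by
    calc (x ⋏ y) ⋏ ((x ∖ z) ⋏ (y ∖ z))
        = x ⋏ ((y ⋏ (x ∖ z)) ⋏ (y ∖ z)) := by
          rw [SBA.wedge_assoc x y _, ← SBA.wedge_assoc y (x ∖ z) (y ∖ z)]
      _ = x ⋏ (((y ∖ z) ⋏ (x ∖ z)) ⋏ (y ∖ z)) := by rw [aux_xc (y_d x z)]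
      _ = (x ∖ z) ⋏ (((y ∖ z) ⋏ (x ∖ z)) ⋏ (y ∖ z)) := aux_xc hz2
      _ = (x ∖ z) ⋏ (y ∖ z) := by
          simpa only [SBA.wedge_assoc] using widem ((x ∖ z) ⋏ (y ∖ z))
  have hA1 : ((x ⋏ y) ∖ z) ⋏ (x ⋏ y) = (x ⋏ y) ∖ z := dw _ _
  have hA2 : (x ⋏ y) ⋏ ((x ⋏ y) ∖ z) = (x ⋏ y) ∖ z := wd _ _
  have hAB : ((x ⋏ y) ∖ z) ∖ ((x ∖ z) ⋏ (y ∖ z)) = SBA.zero := by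
    have hcA := dw ((x ⋏ y) ∖ z) ((x ∖ z) ⋏ (y ∖ z))
    have hAc := wd ((x ⋏ y) ∖ z) ((x ∖ z) ⋏ (y ∖ z))
    obtain ⟨hcw, hwc⟩ := below_trans hcA hAc hA1 hA2
    have hcz : (((x ⋏ y) ∖ z) ∖ ((x ∖ z) ⋏ (y ∖ z))) ⋏ z = SBA.zero := by
      rw [← hcA, SBA.wedge_assoc, d_y (x ⋏ y) z, SBA.wedge_zero]
    exact aux_p1AB hcw hcz (d_y _ _)
  have hBA : ((x ∖ z) ⋏ (y ∖ z)) ∖ ((x ⋏ y) ∖ z) = SBA.zero := by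
    have hdB := dw ((x ∖ z) ⋏ (y ∖ z)) ((x ⋏ y) ∖ z)
    have hBd := wd ((x ∖ z) ⋏ (y ∖ z)) ((x ⋏ y) ∖ z)
    obtain ⟨hdw, hwd⟩ := below_trans hdB hBd hB1 hB2
    have hdz : (((x ∖ z) ⋏ (y ∖ z)) ∖ ((x ⋏ y) ∖ z)) ⋏ z = SBA.zero := by
      rw [← hdB, SBA.wedge_assoc, hstz, SBA.wedge_zero]
    exact aux_dz hdw hdz (d_y _ _)
  exact eqx hA1 hA2 hB1 hB2 hAB hBA

private lemma part2 (x y z : S) : (x ⋎ y) ∖ z = (x ∖ z) ⋎ (y ∖ z) := by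
  have hB1 : ((x ∖ z) ⋎ (y ∖ z)) ⋏ (x ⋎ y) = (x ∖ z) ⋎ (y ∖ z) := by
    rw [SBA.sdistrib2, SBA.sdistrib1, SBA.sdistrib1, dw, dw,
      aux_ecx (d_y x z), aux_ecx (d_y y z), SBA.absorb3]
    exact jlemma _ _
  have hB2 : (x ⋎ y) ⋏ ((x ∖ z) ⋎ (y ∖ z)) = (x ∖ z) ⋎ (y ∖ z) := by
    rw [SBA.sdistrib2, SBA.sdistrib1, SBA.sdistrib1, wd, wd,
      aux_xc (y_d y z), aux_xc (y_d x z), SBA.absorb3]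
    exact jlemma _ _
  have hBz : ((x ∖ z) ⋎ (y ∖ z)) ⋏ z = SBA.zero := by
    rw [SBA.sdistrib2, d_y, d_y, SBA.vee_zero]
  have hA1 : ((x ⋎ y) ∖ z) ⋏ (x ⋎ y) = (x ⋎ y) ∖ z := dw _ _
  have hA2 : (x ⋎ y) ⋏ ((x ⋎ y) ∖ z) = (x ⋎ y) ∖ z := wd _ _
  have hAB : ((x ⋎ y) ∖ z) ∖ ((x ∖ z) ⋎ (y ∖ z)) = SBA.zero := by
    have hcA := dw ((x ⋎ y) ∖ z) ((x ∖ z) ⋎ (y ∖ z))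
    have hAc := wd ((x ⋎ y) ∖ z) ((x ∖ z) ⋎ (y ∖ z))
    obtain ⟨hcw, hwc⟩ := below_trans hcA hAc hA1 hA2
    have hcz : (((x ⋎ y) ∖ z) ∖ ((x ∖ z) ⋎ (y ∖ z))) ⋏ z = SBA.zero := by
      rw [← hcA, SBA.wedge_assoc, d_y (x ⋎ y) z, SBA.wedge_zero]
    have hcB := d_y ((x ⋎ y) ∖ z) ((x ∖ z) ⋎ (y ∖ z))
    rw [SBA.sdistrib1] at hcB
    exact aux_p2AB hcw hcz (zsplit1 hcB) (zsplit2 hcB)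
  have hBA : ((x ∖ z) ⋎ (y ∖ z)) ∖ ((x ⋎ y) ∖ z) = SBA.zero := by
    have hdB := dw ((x ∖ z) ⋎ (y ∖ z)) ((x ⋎ y) ∖ z)
    have hBd := wd ((x ∖ z) ⋎ (y ∖ z)) ((x ⋎ y) ∖ z)
    obtain ⟨hdw, hwd⟩ := below_trans hdB hBd hB1 hB2
    have hdz : (((x ∖ z) ⋎ (y ∖ z)) ∖ ((x ⋎ y) ∖ z)) ⋏ z = SBA.zero := by
      rw [← hdB, SBA.wedge_assoc, hBz, SBA.wedge_zero]
    exact aux_dz hdw hdz (d_y _ _)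
  exact eqx hA1 hA2 hB1 hB2 hAB hBA

end SBALemmas5
section SBALemmas6
variable {S : Type u} [SBA S]

private lemma part6a (x y z : S) : (x ∖ y) ∖ z = x ∖ (y ⋎ z) := by
  have hA1' : ((x ∖ y) ∖ z) ⋏ (x ∖ y) = (x ∖ y) ∖ z := dw _ _
  have hA2' : (x ∖ y) ⋏ ((x ∖ y) ∖ z) = (x ∖ y) ∖ z := wd _ _
  obtain ⟨hA1, hA2⟩ := below_trans hA1' hA2' (dw x y) (wd x y)
  have hB1 : (x ∖ (y ⋎ z)) ⋏ x = x ∖ (y ⋎ z) := dw _ _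
  have hB2 : x ⋏ (x ∖ (y ⋎ z)) = x ∖ (y ⋎ z) := wd _ _
  have hAy : ((x ∖ y) ∖ z) ⋏ y = SBA.zero := by
    rw [← hA1', SBA.wedge_assoc, d_y x y, SBA.wedge_zero]
  have hAz : ((x ∖ y) ∖ z) ⋏ z = SBA.zero := d_y _ _
  have hAB : (((x ∖ y) ∖ z) ∖ (x ∖ (y ⋎ z))) = SBA.zero := by
    have hcA := dw ((x ∖ y) ∖ z) (x ∖ (y ⋎ z))
    have hAc := wd ((x ∖ y) ∖ z) (x ∖ (y ⋎ z))
    obtain ⟨hcx, hxc⟩ := below_trans hcA hAc hA1 hA2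
    have hcy : ((((x ∖ y) ∖ z) ∖ (x ∖ (y ⋎ z)))) ⋏ y = SBA.zero := by
      rw [← hcA, SBA.wedge_assoc, hAy, SBA.wedge_zero]
    have hcz : ((((x ∖ y) ∖ z) ∖ (x ∖ (y ⋎ z)))) ⋏ z = SBA.zero := by
      rw [← hcA, SBA.wedge_assoc, hAz, SBA.wedge_zero]
    have hcyz : ((((x ∖ y) ∖ z) ∖ (x ∖ (y ⋎ z)))) ⋏ (y ⋎ z) = SBA.zero := by
      rw [SBA.sdistrib1, hcy, hcz, SBA.vee_zero]
    exact aux_dz hcx hcyz (d_y _ _)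
  have hBA : ((x ∖ (y ⋎ z)) ∖ ((x ∖ y) ∖ z)) = SBA.zero := by
    have hdB := dw (x ∖ (y ⋎ z)) ((x ∖ y) ∖ z)
    have hBd := wd (x ∖ (y ⋎ z)) ((x ∖ y) ∖ z)
    obtain ⟨hdx, hxd⟩ := below_trans hdB hBd hB1 hB2
    have hByz := d_y x (y ⋎ z)
    rw [SBA.sdistrib1] at hByz
    have hdy : ((x ∖ (y ⋎ z)) ∖ ((x ∖ y) ∖ z)) ⋏ y = SBA.zero := by
      rw [← hdB, SBA.wedge_assoc, zsplit1 hByz, SBA.wedge_zero]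
    have hdz : ((x ∖ (y ⋎ z)) ∖ ((x ∖ y) ∖ z)) ⋏ z = SBA.zero := by
      rw [← hdB, SBA.wedge_assoc, zsplit2 hByz, SBA.wedge_zero]
    have e : ((x ∖ (y ⋎ z)) ∖ ((x ∖ y) ∖ z)) ⋏ (x ⋏ y ⋏ x ⋎ x ∖ y) =
        ((x ∖ (y ⋎ z)) ∖ ((x ∖ y) ∖ z)) ⋏ (x ∖ y) := by
      rw [SBA.sdistrib1, ← SBA.wedge_assoc _ (x ⋏ y) x, ← SBA.wedge_assoc _ x y,
        hdx, hdy, SBA.zero_wedge, SBA.zero_vee]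
    rw [SBA.diff_ax1, hdx] at e
    exact aux_dz e.symm hdz (d_y _ _)
  exact eqx hA1 hA2 hB1 hB2 hAB hBA

private lemma part3comm (x y z : S) : x ∖ (y ⋎ z) = x ∖ (z ⋎ y) := by
  rw [part3, part3]
  exact localcomm (dw x y) (wd x y) (dw x z) (wd x z)

private lemma part6b (x y z : S) : (x ∖ y) ∖ z = x ∖ (z ⋎ y) :=
  (part6a x y z).trans (part3comm x y z)

private lemma part5 (x y z : S) : (x ∖ y) ∖ z = (x ∖ z) ∖ y :=
  (part6b x y z).trans (part6a x z y).symm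

private lemma absorb_mid (x y : S) : (y ⋎ x ⋏ y ⋏ x) ⋎ y = y := by
  have hgy : ((y ⋎ x ⋏ y ⋏ x) ⋎ y) ⋏ y = y := SBA.absorb2 y (y ⋎ x ⋏ y ⋏ x)
  have hyg : y ⋏ ((y ⋎ x ⋏ y ⋏ x) ⋎ y) = y := by
    rw [SBA.vee_assoc]; exact SBA.absorb1 y _
  have hcy := d_y ((y ⋎ x ⋏ y ⋏ x) ⋎ y) y
  have hcg := dw ((y ⋎ x ⋏ y ⋏ x) ⋎ y) y
  have hcn : ((((y ⋎ x ⋏ y ⋏ x) ⋎ y) ∖ y)) ⋏ (x ⋏ y ⋏ x) = SBA.zero := by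
    have u1 := mid0 x hcy
    have u2 : (((((y ⋎ x ⋏ y ⋏ x) ⋎ y) ∖ y) ⋏ x) ⋏ y) ⋏ x = SBA.zero := by
      rw [u1, SBA.zero_wedge]
    simpa only [SBA.wedge_assoc] using u2
  have hc0 : (((y ⋎ x ⋏ y ⋏ x) ⋎ y) ∖ y) = SBA.zero := by
    calc (((y ⋎ x ⋏ y ⋏ x) ⋎ y) ∖ y)
        = ((((y ⋎ x ⋏ y ⋏ x) ⋎ y) ∖ y)) ⋏ ((y ⋎ x ⋏ y ⋏ x) ⋎ y) := hcg.symm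
      _ = (((((y ⋎ x ⋏ y ⋏ x) ⋎ y) ∖ y)) ⋏ y ⋎
            ((((y ⋎ x ⋏ y ⋏ x) ⋎ y) ∖ y)) ⋏ (x ⋏ y ⋏ x)) ⋎
            ((((y ⋎ x ⋏ y ⋏ x) ⋎ y) ∖ y)) ⋏ y := by
          rw [SBA.sdistrib1, SBA.sdistrib1]
      _ = SBA.zero := by rw [hcy, hcn, SBA.vee_zero, SBA.vee_zero]
  have hd := SBA.diff_ax1 ((y ⋎ x ⋏ y ⋏ x) ⋎ y) y
  rw [hgy, hyg, hc0, SBA.vee_zero] at hd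
  exact hd.symm

private lemma part8 (x y : S) : (x ∖ y) ⋎ y = y ⋎ x ⋎ y ∧ y ⋎ x ⋎ y = y ⋎ (x ∖ y) := by
  have comm2 : (x ∖ y) ⋎ y = y ⋎ (x ∖ y) := comm0 (d_y x y) (y_d x y)
  have main : y ⋎ x ⋎ y = y ⋎ (x ∖ y) := by
    calc (y ⋎ x) ⋎ y = (y ⋎ (x ⋏ y ⋏ x ⋎ x ∖ y)) ⋎ y := by rw [SBA.diff_ax1]
      _ = y ⋎ ((x ⋏ y ⋏ x) ⋎ ((x ∖ y) ⋎ y)) := by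
          rw [SBA.vee_assoc y _ y, SBA.vee_assoc]
      _ = y ⋎ ((x ⋏ y ⋏ x) ⋎ (y ⋎ (x ∖ y))) := by rw [comm2]
      _ = ((y ⋎ x ⋏ y ⋏ x) ⋎ y) ⋎ (x ∖ y) := by
          rw [← SBA.vee_assoc (x ⋏ y ⋏ x) y (x ∖ y),
            ← SBA.vee_assoc y (x ⋏ y ⋏ x ⋎ y) (x ∖ y),
            ← SBA.vee_assoc y (x ⋏ y ⋏ x) y]
      _ = y ⋎ (x ∖ y) := by rw [absorb_mid]
  exact ⟨comm2.trans main.symm, main⟩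

end SBALemmas6
theorem stmt0 (S : Type u) [SBA S] (x y z : S) :
    (x ⋏ y) ∖ z = (x ∖ z) ⋏ (y ∖ z) ∧
    (x ⋎ y) ∖ z = (x ∖ z) ⋎ (y ∖ z) ∧
    x ∖ (y ⋎ z) = (x ∖ y) ⋏ (x ∖ z) ∧
    x ∖ (y ⋏ z) = (x ∖ y) ⋎ (x ∖ z) ∧
    (x ∖ y) ∖ z = (x ∖ z) ∖ y ∧
    ((x ∖ y) ∖ z = x ∖ (y ⋎ z) ∧ (x ∖ y) ∖ z = x ∖ (z ⋎ y)) ∧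
    x ∖ (x ∖ y) = x ⋏ y ⋏ x ∧
    ((x ∖ y) ⋎ y = y ⋎ x ⋎ y ∧ y ⋎ x ⋎ y = y ⋎ (x ∖ y)) ∧
    (x ∖ (x ⋏ y) = x ∖ (y ⋏ x) ∧ x ∖ (y ⋏ x) = x ∖ y) := by
  refine ⟨part1 x y z, part2 x y z, part3 x y z, part4 x y z, part5 x y z,
    ⟨part6a x y z, part6b x y z⟩, part7 x y, ⟨(part8 x y).1, (part8 x y).2⟩,
    ⟨?_, part9b x y⟩⟩
  rw [part9a, part9b]
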